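/- arXiv:1006.3632 — 6 statements merged into one kernel-verified Lean document; each statement's English description precedes it below -/
import Mathlib

section
/- Let C(t) be a differentiable n×n real matrix-valued function on an interval I satisfying the Riccati-type equation dC/dt = M(t) applied as C·M·C minus N, i.e. dC/dt − C(t)M(t)C(t) + N(t) = 0, where M(t) and N(t) are continuous symmetric n×n matrix functions. If C(t₀) is symmetric at some t₀ ∈ I, then C(t) is symmetric for all t ∈ I. -/
open Matrix Set

/-! Since `M` and `N` are symmetric, the antisymmetric part `X = Cᵀ - C` solves the linear
homogeneous equation `X' = (Cᵀ M) X + X (M C)`, whose coefficients are continuous. A linear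
equation with continuous coefficients is locally Lipschitz, so by uniqueness of solutions `X`
vanishes on the whole interval once it vanishes at `t₀`. -/

theorem eqOn_zero_of_hasDerivAt_clm_apply {E : Type*} [NormedAddCommGroup E] [NormedSpace ℝ E]
    {L : ℝ → E →L[ℝ] E} {X : ℝ → E} {a b t₀ : ℝ} (hL : ContinuousOn L (Ioo a b))
    (hX : ∀ t ∈ Ioo a b, HasDerivAt X (L t (X t)) t) (ht₀ : t₀ ∈ Ioo a b)
    (hX₀ : X t₀ = 0) :
    EqOn X 0 (Ioo a b) := by
  intro t ht
  obtain ⟨a', ha', ha't⟩ := exists_between (lt_min ht₀.1 ht.1)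
  obtain ⟨b', hb't, hb'⟩ := exists_between (max_lt ht₀.2 ht.2)
  obtain ⟨K, hK⟩ :=
    isCompact_Icc.exists_bound_of_continuousOn (hL.mono (Icc_subset_Ioo ha' hb'))
  have hLip : ∀ s ∈ Ioo a' b', LipschitzOnWith K.toNNReal (L s) univ := fun s hs =>
    ((L s).lipschitz.weaken
      (NNReal.le_toNNReal_of_coe_le (hK s (Ioo_subset_Icc_self hs)))).lipschitzOnWith
  have hsub : Ioo a' b' ⊆ Ioo a b := (Ioo_subset_Icc_self).trans (Icc_subset_Ioo ha' hb')
  refine ODE_solution_unique_of_mem_Ioo hLip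
    ⟨ha't.trans_le (min_le_left _ _), (le_max_left _ _).trans_lt hb't⟩
    (fun s hs => ⟨hX s (hsub hs), mem_univ _⟩)
    (fun s _ => ⟨by simp, mem_univ _⟩) hX₀
    ⟨ha't.trans_le (min_le_right _ _), (le_max_right _ _).trans_lt hb't⟩

section EntrywiseNorm

-- The sup norm makes the derivative of a matrix function the matrix of entrywise derivatives.
attribute [local instance] Matrix.normedAddCommGroup Matrix.normedSpace

theorem Matrix.eqOn_zero_of_hasDerivAt_mul_add_mul {n : Type*} [Fintype n]
    {P Q X : ℝ → Matrix n n ℝ} {a b t₀ : ℝ}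
    (hP : ContinuousOn P (Ioo a b)) (hQ : ContinuousOn Q (Ioo a b))
    (hX : ∀ t ∈ Ioo a b, ∀ i j, HasDerivAt (fun s => X s i j) ((P t * X t + X t * Q t) i j) t)
    (ht₀ : t₀ ∈ Ioo a b) (hX₀ : X t₀ = 0) : EqOn X 0 (Ioo a b) := by
  let L : ℝ → Matrix n n ℝ →L[ℝ] Matrix n n ℝ := fun t =>
    LinearMap.toContinuousLinearMap (LinearMap.mulLeft ℝ (P t) + LinearMap.mulRight ℝ (Q t))
  refine eqOn_zero_of_hasDerivAt_clm_apply (L := L) ?_ ?_ ht₀ hX₀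
  · exact continuousOn_clm_apply.2 fun _ =>
      (hP.mul continuousOn_const).add (continuousOn_const.mul hQ)
  · exact fun t ht => hasDerivAt_pi.2 fun i => hasDerivAt_pi.2 fun j => hX t ht i j

end EntrywiseNorm

theorem Matrix.transpose_sub_riccati {n R : Type*} [Fintype n] [CommRing R]
    (C M N : Matrix n n R) (hM : Mᵀ = M) (hN : Nᵀ = N) :
    (C * M * C - N)ᵀ - (C * M * C - N) = Cᵀ * M * (Cᵀ - C) + (Cᵀ - C) * (M * C) := by
  simp only [transpose_sub, transpose_mul, hM, hN]
  noncomm_ring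

theorem stmt_0_general (n : ℕ) (a b t₀ : ℝ) (ht₀ : t₀ ∈ Ioo a b)
    (M N C : ℝ → Matrix (Fin n) (Fin n) ℝ)
    (hMcont : ContinuousOn M (Ioo a b))
    (hMsymm : ∀ t ∈ Ioo a b, (M t)ᵀ = M t)
    (hNsymm : ∀ t ∈ Ioo a b, (N t)ᵀ = N t)
    (hC : ∀ t ∈ Ioo a b, ∀ i j, HasDerivAt (fun s => C s i j)
      ((C t * M t * C t - N t) i j) t)
    (hC₀ : (C t₀)ᵀ = C t₀) :
    ∀ t ∈ Ioo a b, (C t)ᵀ = C t := by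
  have hCcont : ContinuousOn C (Ioo a b) := fun t ht =>
    continuousWithinAt_pi.2 fun i => continuousWithinAt_pi.2 fun j =>
      (hC t ht i j).continuousAt.continuousWithinAt
  have hCtcont : ContinuousOn (fun t => (C t)ᵀ) (Ioo a b) :=
    continuous_id.matrix_transpose.comp_continuousOn hCcont
  have hX : ∀ t ∈ Ioo a b, ∀ i j, HasDerivAt (fun s => ((C s)ᵀ - C s) i j)
      (((C t)ᵀ * M t * ((C t)ᵀ - C t) + ((C t)ᵀ - C t) * (M t * C t)) i j) t := by
    intro t ht i j
    rw [← transpose_sub_riccati _ _ _ (hMsymm t ht) (hNsymm t ht)]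
    exact (hC t ht j i).sub (hC t ht i j)
  intro t ht
  exact sub_eq_zero.1 (eqOn_zero_of_hasDerivAt_mul_add_mul (hCtcont.mul hMcont)
    (hMcont.mul hCcont) hX ht₀ (sub_eq_zero.2 hC₀) ht)

/-- If a differentiable matrix function `C` on an interval satisfies the
Riccati-type equation `C' = C·M·C − N` with `M, N` continuous and symmetric, and `C` is
symmetric at some point `t₀` of the interval, then `C` is symmetric on the whole interval. -/
theorem stmt_0 (n : ℕ) (a b t₀ : ℝ) (ht₀ : t₀ ∈ Ioo a b)
    (M N C : ℝ → Matrix (Fin n) (Fin n) ℝ)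
    (hMcont : ContinuousOn M (Ioo a b)) (hNcont : ContinuousOn N (Ioo a b))
    (hMsymm : ∀ t ∈ Ioo a b, (M t)ᵀ = M t)
    (hNsymm : ∀ t ∈ Ioo a b, (N t)ᵀ = N t)
    (hC : ∀ t ∈ Ioo a b, ∀ i j, HasDerivAt (fun s => C s i j)
      ((C t * M t * C t - N t) i j) t)
    (hC₀ : (C t₀)ᵀ = C t₀) :
    ∀ t ∈ Ioo a b, (C t)ᵀ = C t :=
  stmt_0_general n a b t₀ ht₀ M N C hMcont hMsymm hNsymm hC hC₀
end

section
/- With the hypotheses of the previous linearization (K' = M·E, E' = N·K with M, N continuous and symmetric), if additionally the initial data are E(t₀) = 0 and K(t₀) = I (the identity matrix), then C(t) = −E(t)·K(t)⁻¹ is symmetric on any interval containing t₀ on which K(t) remains invertible. -/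
/-!
Along solutions of `K' = M E`, `E' = N K` with `M`, `N` symmetric, the matrix `Kᵀ E - Eᵀ K` has
derivative `Eᵀ M E + Kᵀ N K - Kᵀ N K - Eᵀ M E = 0`, so it keeps its initial value `0`. Wherever `K`
is invertible, `Kᵀ E = Eᵀ K` says exactly that `E K⁻¹ = K⁻ᵀ Eᵀ = (E K⁻¹)ᵀ`.
-/

open Matrix Set

namespace Matrix

section Derivative

variable {𝕜 : Type*} [NontriviallyNormedField 𝕜] {l m p : Type*}

theorem hasDerivAt_mul_apply [Fintype m] {A : 𝕜 → Matrix l m 𝕜} {B : 𝕜 → Matrix m p 𝕜}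
    {A' : Matrix l m 𝕜} {B' : Matrix m p 𝕜} {t : 𝕜}
    (hA : ∀ i j, HasDerivAt (fun s => A s i j) (A' i j) t)
    (hB : ∀ i j, HasDerivAt (fun s => B s i j) (B' i j) t) (i : l) (k : p) :
    HasDerivAt (fun s => (A s * B s) i k) ((A' * B t + A t * B') i k) t := by
  simp only [mul_apply, add_apply, ← Finset.sum_add_distrib]
  exact HasDerivAt.fun_sum fun j _ => (hA i j).mul (hB j k)

theorem hasDerivAt_transpose_mul_sub_transpose_mul_apply [Fintype m]
    {K E : 𝕜 → Matrix m m 𝕜} {M N : Matrix m m 𝕜} {t : 𝕜} (hM : M.IsSymm) (hN : N.IsSymm)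
    (hK : ∀ i j, HasDerivAt (fun s => K s i j) ((M * E t) i j) t)
    (hE : ∀ i j, HasDerivAt (fun s => E s i j) ((N * K t) i j) t) (i j : m) :
    HasDerivAt (fun s => ((K s)ᵀ * E s - (E s)ᵀ * K s) i j) 0 t := by
  have hderiv := (hasDerivAt_mul_apply (A := fun s => (K s)ᵀ) (A' := (M * E t)ᵀ)
    (fun i j => hK j i) hE i j).sub
    (hasDerivAt_mul_apply (A := fun s => (E s)ᵀ) (A' := (N * K t)ᵀ) (fun i j => hE j i) hK i j)
  have hzero : ((M * E t)ᵀ * E t + (K t)ᵀ * (N * K t)) -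
      ((N * K t)ᵀ * K t + (E t)ᵀ * (M * E t)) = 0 := by
    simp only [transpose_mul, hM.eq, hN.eq, Matrix.mul_assoc]
    abel
  exact hderiv.congr_deriv (by rw [← sub_apply, hzero, zero_apply])

end Derivative

theorem eq_of_hasDerivAt_apply_eq_zero {𝕜 m p : Type*} [RCLike 𝕜] {s : Set 𝕜}
    (hs : IsOpen s) (hs' : IsPreconnected s)
    {F : 𝕜 → Matrix m p 𝕜} (hF : ∀ t ∈ s, ∀ i j, HasDerivAt (fun u => F u i j) 0 t)
    {x y : 𝕜} (hx : x ∈ s) (hy : y ∈ s) : F x = F y := by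
  ext i j
  exact hs.is_const_of_deriv_eq_zero hs'
    (fun t ht => (hF t ht i j).differentiableAt.differentiableWithinAt)
    (fun t ht => (hF t ht i j).deriv) hx hy

theorem isSymm_mul_inv_of_transpose_mul_eq {R m : Type*} [CommRing R] [Fintype m]
    [DecidableEq m] {K E : Matrix m m R} (h : Kᵀ * E = Eᵀ * K) (hK : IsUnit K.det) :
    (E * K⁻¹).IsSymm := by
  have hKT : IsUnit Kᵀ.det := by rwa [det_transpose]
  have hEK : Kᵀ * (E * K⁻¹) = Eᵀ := by
    rw [← Matrix.mul_assoc, h, Matrix.mul_assoc, mul_nonsing_inv _ hK, Matrix.mul_one]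
  rw [IsSymm, transpose_mul, transpose_nonsing_inv, ← hEK, nonsing_inv_mul_cancel_left _ _ hKT]

end Matrix

theorem stmt_2_general (n : ℕ) (a b c d t₀ : ℝ) (hsub : Ioo c d ⊆ Ioo a b)
    (ht₀ : t₀ ∈ Ioo c d)
    (M N K E : ℝ → Matrix (Fin n) (Fin n) ℝ)
    (hMsymm : ∀ t ∈ Ioo a b, (M t)ᵀ = M t)
    (hNsymm : ∀ t ∈ Ioo a b, (N t)ᵀ = N t)
    (hK : ∀ t ∈ Ioo a b, ∀ i j, HasDerivAt (fun s => K s i j) ((M t * E t) i j) t)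
    (hE : ∀ t ∈ Ioo a b, ∀ i j, HasDerivAt (fun s => E s i j) ((N t * K t) i j) t)
    (hE₀ : E t₀ = 0) (hK₀ : K t₀ = 1)
    (hinv : ∀ t ∈ Ioo c d, IsUnit (K t).det) :
    ∀ t ∈ Ioo c d, (-(E t) * (K t)⁻¹ : Matrix (Fin n) (Fin n) ℝ)ᵀ
      = -(E t) * (K t)⁻¹ := by
  intro t ht
  have hconst : (K t)ᵀ * E t - (E t)ᵀ * K t = (K t₀)ᵀ * E t₀ - (E t₀)ᵀ * K t₀ :=
    eq_of_hasDerivAt_apply_eq_zero isOpen_Ioo isPreconnected_Ioo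
      (fun s hs => hasDerivAt_transpose_mul_sub_transpose_mul_apply (hMsymm s hs) (hNsymm s hs)
        (hK s hs) (hE s hs)) (hsub ht) (hsub ht₀)
  rw [hE₀, hK₀, Matrix.mul_zero, transpose_zero, Matrix.zero_mul, sub_zero, sub_eq_zero] at hconst
  rw [neg_mul]
  exact (isSymm_mul_inv_of_transpose_mul_eq hconst (hinv t ht)).neg

/-- With `K' = M·E`, `E' = N·K`, `M, N` continuous and symmetric, and initial
data `E t₀ = 0`, `K t₀ = 1`, the matrix `C := −E·K⁻¹` is symmetric on any (sub)interval
containing `t₀` on which `K` remains invertible. -/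
theorem stmt_2 (n : ℕ) (a b c d t₀ : ℝ) (hsub : Ioo c d ⊆ Ioo a b)
    (ht₀ : t₀ ∈ Ioo c d)
    (M N K E : ℝ → Matrix (Fin n) (Fin n) ℝ)
    (hMcont : ContinuousOn M (Ioo a b)) (hNcont : ContinuousOn N (Ioo a b))
    (hMsymm : ∀ t ∈ Ioo a b, (M t)ᵀ = M t)
    (hNsymm : ∀ t ∈ Ioo a b, (N t)ᵀ = N t)
    (hK : ∀ t ∈ Ioo a b, ∀ i j, HasDerivAt (fun s => K s i j) ((M t * E t) i j) t)
    (hE : ∀ t ∈ Ioo a b, ∀ i j, HasDerivAt (fun s => E s i j) ((N t * K t) i j) t)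
    (hE₀ : E t₀ = 0) (hK₀ : K t₀ = 1)
    (hinv : ∀ t ∈ Ioo c d, IsUnit (K t).det) :
    ∀ t ∈ Ioo c d, (-(E t) * (K t)⁻¹ : Matrix (Fin n) (Fin n) ℝ)ᵀ
      = -(E t) * (K t)⁻¹ :=
  stmt_2_general n a b c d t₀ hsub ht₀ M N K E hMsymm hNsymm hK hE hE₀ hK₀ hinv
end

section
/- (Sufficiency of the Riccati solution for positivity of the second variation) Let G : [t₀,t₁] → Matrix (Fin r) (Fin r) ℝ be continuous, symmetric, and positive definite for every t; let B : [t₀,t₁] → Matrix (Fin n) (Fin r) ℝ and N : [t₀,t₁] → Matrix (Fin n) (Fin n) ℝ be continuous with N symmetric; and suppose there exists a C¹ symmetric matrix function C(t) on [t₀,t₁] solving C' − C·B·G⁻¹·Bᵀ·C + N = 0. Then for every C¹ pair (X, Y) : [t₀,t₁] → ℝⁿ × ℝʳ satisfying X'(t) = B(t)·Y(t) (up to the connection terms absorbed into the derivative) with X(t₀) = X(t₁) = 0 and (X,Y) not identically zero, ∫_{t₀}^{t₁} [ Xᵀ N X + 2 Xᵀ C B Y + Yᵀ G Y + (d/dt)(Xᵀ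 C X) ] dt = ∫_{t₀}^{t₁} Ỹᵀ G Ỹ dt > 0, where Ỹ = Y + G⁻¹ Bᵀ C X. In particular ∫ (Xᵀ N X + Yᵀ G Y) dt > 0 since the total-derivative term integrates to zero. -/
/-!
Completing the square: if `C` solves the Riccati equation, then along every solution of
`X' = B Y` the second-variation integrand plus the exact derivative `(Xᵀ C X)'` equals
`Ỹᵀ G Ỹ`, where `Ỹ = Y + G⁻¹ Bᵀ C X`. The exact derivative integrates to zero because `X`
vanishes at both ends, and `∫ Ỹᵀ G Ỹ ≥ 0` with equality only if `Ỹ ≡ 0`. In that case `X`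
solves the linear equation `X' = -B G⁻¹ Bᵀ C X` with `X(t₀) = 0`, so Grönwall forces `X ≡ 0`
and then `Y = Ỹ - G⁻¹ Bᵀ C X ≡ 0`.
-/

open Matrix Set intervalIntegral

section Continuity

variable {α : Type*} [TopologicalSpace α] {s : Set α} {l m n R : Type*} [TopologicalSpace R]

theorem ContinuousOn.matrix_mul [Fintype m] [NonUnitalNonAssocSemiring R]
    [IsTopologicalSemiring R] {A : α → Matrix l m R} {B : α → Matrix m n R}
    (hA : ContinuousOn A s) (hB : ContinuousOn B s) : ContinuousOn (fun x => A x * B x) s := by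
  rw [continuousOn_iff_continuous_domRestrict] at *
  exact hA.matrix_mul hB

theorem ContinuousOn.matrix_mulVec [Fintype m] [NonUnitalNonAssocSemiring R]
    [IsTopologicalSemiring R] {A : α → Matrix l m R} {v : α → m → R}
    (hA : ContinuousOn A s) (hv : ContinuousOn v s) : ContinuousOn (fun x => A x *ᵥ v x) s := by
  rw [continuousOn_iff_continuous_domRestrict] at *
  exact hA.matrix_mulVec hv

theorem ContinuousOn.dotProduct [Fintype m] [NonUnitalNonAssocSemiring R]
    [IsTopologicalSemiring R] {v w : α → m → R} (hv : ContinuousOn v s) (hw : ContinuousOn w s) :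
    ContinuousOn (fun x => v x ⬝ᵥ w x) s := by
  rw [continuousOn_iff_continuous_domRestrict] at *
  exact hv.dotProduct hw

theorem ContinuousOn.matrix_transpose {A : α → Matrix m n R} (hA : ContinuousOn A s) :
    ContinuousOn (fun x => (A x)ᵀ) s := by
  rw [continuousOn_iff_continuous_domRestrict] at *
  exact hA.matrix_transpose

theorem ContinuousOn.matrix_inv [Fintype m] [DecidableEq m] {𝕜 : Type*} [NormedField 𝕜]
    {A : α → Matrix m m 𝕜} (hA : ContinuousOn A s) (hdet : ∀ x ∈ s, (A x).det ≠ 0) :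
    ContinuousOn (fun x => (A x)⁻¹) s := fun x hx =>
  (continuousAt_matrix_inv _ (by
    simpa only [Ring.inverse_eq_inv'] using continuousAt_inv₀ (hdet x hx))).comp_continuousWithinAt
    (hA x hx)

end Continuity

section Derivatives

variable {m n : Type*} [Fintype n] {s : Set ℝ} {t : ℝ}

theorem HasDerivWithinAt.dotProduct {v w : ℝ → n → ℝ} {v' w' : n → ℝ}
    (hv : HasDerivWithinAt v v' s t) (hw : HasDerivWithinAt w w' s t) :
    HasDerivWithinAt (fun u => v u ⬝ᵥ w u) (v' ⬝ᵥ w t + v t ⬝ᵥ w') s t := by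
  simp only [_root_.dotProduct, ← Finset.sum_add_distrib]
  exact .fun_sum fun i _ => (hasDerivWithinAt_pi.1 hv i).mul (hasDerivWithinAt_pi.1 hw i)

theorem HasDerivWithinAt.matrix_mulVec {A : ℝ → Matrix m n ℝ} {A' : Matrix m n ℝ}
    {v : ℝ → n → ℝ} {v' : n → ℝ} (hA : ∀ i j, HasDerivWithinAt (fun u => A u i j) (A' i j) s t)
    (hv : HasDerivWithinAt v v' s t) :
    HasDerivWithinAt (fun u => A u *ᵥ v u) (A' *ᵥ v t + A t *ᵥ v') s t :=
  hasDerivWithinAt_pi.2 fun i => (hasDerivWithinAt_pi.2 (hA i)).dotProduct hv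

end Derivatives

section Algebra

variable {m n R : Type*} [Fintype m] [Fintype n] [DecidableEq m] [CommRing R]

theorem Matrix.det_ne_zero_of_dotProduct_mulVec_pos [IsDomain R] [Preorder R] {A : Matrix m m R}
    (hA : ∀ v : m → R, v ≠ 0 → 0 < v ⬝ᵥ A *ᵥ v) : A.det ≠ 0 := by
  intro h0
  obtain ⟨v, hv, hAv⟩ := exists_mulVec_eq_zero_iff.2 h0
  simpa [hAv] using hA v hv

theorem Matrix.dotProduct_mulVec_comm_of_transpose_eq {c : Matrix n n R} (hc : cᵀ = c)
    (x y : n → R) : x ⬝ᵥ c *ᵥ y = y ⬝ᵥ c *ᵥ x := by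
  rw [dotProduct_mulVec, ← mulVec_transpose, hc, dotProduct_comm]

theorem Matrix.dotProduct_mulVec_add_inv_mul {g : Matrix m m R} {b : Matrix n m R}
    {c : Matrix n n R} (hg : gᵀ = g) (hdet : IsUnit g.det) (hc : cᵀ = c) (x : n → R)
    (y : m → R) :
    (y + (g⁻¹ * bᵀ * c) *ᵥ x) ⬝ᵥ g *ᵥ (y + (g⁻¹ * bᵀ * c) *ᵥ x)
      = y ⬝ᵥ g *ᵥ y + 2 * ((b *ᵥ y) ⬝ᵥ c *ᵥ x) + x ⬝ᵥ (c * b * g⁻¹ * bᵀ * c) *ᵥ x := by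
  have hKt : (g⁻¹ * bᵀ * c)ᵀ = c * b * g⁻¹ := by
    rw [transpose_mul, transpose_mul, transpose_nonsing_inv, hg, hc, transpose_transpose,
      Matrix.mul_assoc]
  have hgK : g * (g⁻¹ * bᵀ * c) = bᵀ * c := by
    rw [← Matrix.mul_assoc, ← Matrix.mul_assoc, mul_nonsing_inv _ hdet, Matrix.one_mul]
  have hcross : y ⬝ᵥ g *ᵥ ((g⁻¹ * bᵀ * c) *ᵥ x) = (b *ᵥ y) ⬝ᵥ c *ᵥ x := by
    rw [mulVec_mulVec, hgK, ← mulVec_mulVec, dotProduct_mulVec, vecMul_transpose]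
  have hsq : ((g⁻¹ * bᵀ * c) *ᵥ x) ⬝ᵥ g *ᵥ ((g⁻¹ * bᵀ * c) *ᵥ x)
      = x ⬝ᵥ (c * b * g⁻¹ * bᵀ * c) *ᵥ x := by
    rw [mulVec_mulVec, hgK, dotProduct_mulVec, vecMul_mulVec, hKt, ← dotProduct_mulVec,
      ← Matrix.mul_assoc (c * b * g⁻¹)]
  rw [mulVec_add, add_dotProduct, dotProduct_add, dotProduct_add, hsq,
    dotProduct_mulVec_comm_of_transpose_eq hg ((g⁻¹ * bᵀ * c) *ᵥ x) y, hcross]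
  ring

/-- The right-hand side is the derivative of `Xᵀ C X` when `X' = b y` and `C' = c b g⁻¹ bᵀ c - N`
(the Riccati equation). -/
theorem Matrix.riccati_completion {g : Matrix m m R} {b : Matrix n m R} {c N : Matrix n n R}
    (hg : gᵀ = g) (hdet : IsUnit g.det) (hc : cᵀ = c) (x : n → R) (y : m → R) :
    (y + (g⁻¹ * bᵀ * c) *ᵥ x) ⬝ᵥ g *ᵥ (y + (g⁻¹ * bᵀ * c) *ᵥ x)
        - (x ⬝ᵥ N *ᵥ x + y ⬝ᵥ g *ᵥ y)
      = (b *ᵥ y) ⬝ᵥ c *ᵥ x + x ⬝ᵥ ((c * b * g⁻¹ * bᵀ * c - N) *ᵥ x + c *ᵥ (b *ᵥ y)) := by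
  rw [dotProduct_mulVec_add_inv_mul hg hdet hc, sub_mulVec, dotProduct_add, dotProduct_sub,
    dotProduct_mulVec_comm_of_transpose_eq hc x (b *ᵥ y)]
  ring

end Algebra

theorem intervalIntegral.integral_eq_of_hasDerivWithinAt_sub {a b : ℝ} (hab : a ≤ b)
    {P φ q : ℝ → ℝ} (hP : ContinuousOn P (Icc a b)) (hφ : ContinuousOn φ (Icc a b))
    (hq : ∀ t ∈ Icc a b, HasDerivWithinAt q (φ t - P t) (Icc a b) t) (hqab : q a = q b) :
    ∫ t in a..b, P t = ∫ t in a..b, φ t := by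
  have hPi := hP.intervalIntegrable_of_Icc (μ := MeasureTheory.volume) hab
  have hφi := hφ.intervalIntegrable_of_Icc (μ := MeasureTheory.volume) hab
  have hexact : ∫ t in a..b, (φ t - P t) = 0 := by
    rw [integral_eq_sub_of_hasDeriv_right_of_le hab (fun t ht => (hq t ht).continuousWithinAt)
      (fun t ht => ((hq t (Ioo_subset_Icc_self ht)).hasDerivAt
        (Icc_mem_nhds ht.1 ht.2)).hasDerivWithinAt) (hφi.sub hPi), hqab, sub_self]
  rw [integral_sub hφi hPi, sub_eq_zero] at hexact
  exact hexact.symm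

theorem intervalIntegral.integral_dotProduct_mulVec_pos {m : Type*} [Fintype m] {a b : ℝ}
    (hab : a < b) {G : ℝ → Matrix m m ℝ} {v : ℝ → m → ℝ} (hG : ContinuousOn G (Icc a b))
    (hv : ContinuousOn v (Icc a b))
    (hGpos : ∀ t ∈ Icc a b, ∀ w : m → ℝ, w ≠ 0 → 0 < w ⬝ᵥ G t *ᵥ w)
    (hne : ∃ t ∈ Icc a b, v t ≠ 0) : 0 < ∫ t in a..b, v t ⬝ᵥ G t *ᵥ v t := by
  obtain ⟨s, hs, hvs⟩ := hne
  refine integral_pos hab (hv.dotProduct (hG.matrix_mulVec hv)) (fun t ht => ?_)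
    ⟨s, hs, hGpos s hs _ hvs⟩
  rcases eq_or_ne (v t) 0 with h0 | h0
  · simp [h0]
  · exact (hGpos t (Ioc_subset_Icc_self ht) _ h0).le

attribute [local instance] Matrix.linftyOpNormedAddCommGroup in
theorem eqOn_zero_of_hasDerivWithinAt_mulVec {m : Type*} [Fintype m] {a b : ℝ}
    {A : ℝ → Matrix m m ℝ} {X : ℝ → m → ℝ} (hA : ContinuousOn A (Icc a b))
    (hX : ∀ t ∈ Icc a b, HasDerivWithinAt X (A t *ᵥ X t) (Icc a b) t) (ha : X a = 0) :
    EqOn X 0 (Icc a b) := by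
  obtain ⟨K, hK⟩ := isCompact_Icc.exists_bound_of_continuousOn hA
  exact eq_zero_of_abs_deriv_le_mul_abs_self_of_eq_zero_right
    (fun t ht => (hX t ht).continuousWithinAt)
    (fun t ht => (hX t (Ico_subset_Icc_self ht)).mono_of_mem_nhdsWithin
      (Icc_mem_nhdsGE_of_mem ht))
    ha fun t ht => (linfty_opNorm_mulVec _ _).trans
      (mul_le_mul_of_nonneg_right (hK t (Ico_subset_Icc_self ht)) (norm_nonneg _))

theorem exists_add_mulVec_ne_zero_of_hasDerivWithinAt {m ρ : Type*} [Fintype m] [Fintype ρ]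
    {a b : ℝ} {B : ℝ → Matrix m ρ ℝ} {K : ℝ → Matrix ρ m ℝ} {X : ℝ → m → ℝ} {Y : ℝ → ρ → ℝ}
    (hB : ContinuousOn B (Icc a b)) (hK : ContinuousOn K (Icc a b))
    (hX : ∀ t ∈ Icc a b, HasDerivWithinAt X (B t *ᵥ Y t) (Icc a b) t) (ha : X a = 0)
    (hnz : ∃ t ∈ Icc a b, X t ≠ 0 ∨ Y t ≠ 0) :
    ∃ t ∈ Icc a b, Y t + K t *ᵥ X t ≠ 0 := by
  by_contra! hzero
  have hY : ∀ t ∈ Icc a b, Y t = -(K t *ᵥ X t) := fun t ht =>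
    eq_neg_of_add_eq_zero_left (hzero t ht)
  have hX0 : EqOn X 0 (Icc a b) :=
    eqOn_zero_of_hasDerivWithinAt_mulVec (A := fun t => -(B t * K t)) (hB.matrix_mul hK).neg
      (fun t ht => by simpa only [hY t ht, mulVec_neg, mulVec_mulVec, neg_mulVec] using hX t ht)
      ha
  obtain ⟨t, ht, hne⟩ := hnz
  simp [hY t ht, hX0 ht] at hne

theorem stmt_13_general (n r : ℕ) (t₀ t₁ : ℝ) (h : t₀ < t₁)
    (G : ℝ → Matrix (Fin r) (Fin r) ℝ) (hGc : ContinuousOn G (Icc t₀ t₁))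
    (hGs : ∀ t ∈ Icc t₀ t₁, (G t)ᵀ = G t)
    (hGpos : ∀ t ∈ Icc t₀ t₁, ∀ v : Fin r → ℝ, v ≠ 0 → 0 < v ⬝ᵥ (G t).mulVec v)
    (B : ℝ → Matrix (Fin n) (Fin r) ℝ) (hBc : ContinuousOn B (Icc t₀ t₁))
    (N : ℝ → Matrix (Fin n) (Fin n) ℝ) (hNc : ContinuousOn N (Icc t₀ t₁))
    (C : ℝ → Matrix (Fin n) (Fin n) ℝ)
    (hCs : ∀ t ∈ Icc t₀ t₁, (C t)ᵀ = C t)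
    (hCd : ∀ t ∈ Icc t₀ t₁, ∀ i j, HasDerivWithinAt (fun s => C s i j)
      ((C t * B t * (G t)⁻¹ * (B t)ᵀ * C t - N t) i j) (Icc t₀ t₁) t)
    (X : ℝ → Fin n → ℝ) (Y : ℝ → Fin r → ℝ)
    (hYc : ContinuousOn Y (Icc t₀ t₁))
    (hvar : ∀ t ∈ Icc t₀ t₁, HasDerivWithinAt X ((B t).mulVec (Y t)) (Icc t₀ t₁) t)
    (hX0 : X t₀ = 0) (hX1 : X t₁ = 0)
    (hnz : ∃ t ∈ Icc t₀ t₁, X t ≠ 0 ∨ Y t ≠ 0)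
    (Ytil : ℝ → Fin r → ℝ)
    (hYtil : ∀ t, Ytil t = Y t + ((G t)⁻¹ * (B t)ᵀ * C t).mulVec (X t)) :
    (∀ t ∈ Icc t₀ t₁,
      X t ⬝ᵥ (N t).mulVec (X t) + Y t ⬝ᵥ (G t).mulVec (Y t) +
          derivWithin (fun s => X s ⬝ᵥ (C s).mulVec (X s)) (Icc t₀ t₁) t
        = Ytil t ⬝ᵥ (G t).mulVec (Ytil t)) ∧
    (∫ t in t₀..t₁, (X t ⬝ᵥ (N t).mulVec (X t) + Y t ⬝ᵥ (G t).mulVec (Y t)))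
      = (∫ t in t₀..t₁, Ytil t ⬝ᵥ (G t).mulVec (Ytil t)) ∧
    0 < (∫ t in t₀..t₁, Ytil t ⬝ᵥ (G t).mulVec (Ytil t)) ∧
    0 < ∫ t in t₀..t₁, (X t ⬝ᵥ (N t).mulVec (X t) + Y t ⬝ᵥ (G t).mulVec (Y t)) := by
  have hGdet t (ht : t ∈ Icc t₀ t₁) : (G t).det ≠ 0 :=
    det_ne_zero_of_dotProduct_mulVec_pos (hGpos t ht)
  have hXc : ContinuousOn X (Icc t₀ t₁) := fun t ht => (hvar t ht).continuousWithinAt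
  have hCc : ContinuousOn C (Icc t₀ t₁) := continuousOn_pi.2 fun i => continuousOn_pi.2
    fun j t ht => (hCd t ht i j).continuousWithinAt
  have hKc : ContinuousOn (fun t => (G t)⁻¹ * (B t)ᵀ * C t) (Icc t₀ t₁) :=
    ((hGc.matrix_inv hGdet).matrix_mul hBc.matrix_transpose).matrix_mul hCc
  have hYtc : ContinuousOn Ytil (Icc t₀ t₁) :=
    (hYc.add (hKc.matrix_mulVec hXc)).congr fun t _ => hYtil t
  have hq : ∀ t ∈ Icc t₀ t₁, HasDerivWithinAt (fun s => X s ⬝ᵥ (C s).mulVec (X s))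
      (Ytil t ⬝ᵥ (G t).mulVec (Ytil t)
        - (X t ⬝ᵥ (N t).mulVec (X t) + Y t ⬝ᵥ (G t).mulVec (Y t))) (Icc t₀ t₁) t := by
    intro t ht
    rw [hYtil, riccati_completion (hGs t ht) (hGdet t ht).isUnit (hCs t ht)]
    exact (hvar t ht).dotProduct (.matrix_mulVec (hCd t ht) (hvar t ht))
  have hint := integral_eq_of_hasDerivWithinAt_sub h.le
    ((hXc.dotProduct (hNc.matrix_mulVec hXc)).add (hYc.dotProduct (hGc.matrix_mulVec hYc)))
    (hYtc.dotProduct (hGc.matrix_mulVec hYtc)) hq (by simp [hX0, hX1])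
  have hpos := integral_dotProduct_mulVec_pos h hGc hYtc hGpos (by
    simpa only [hYtil] using exists_add_mulVec_ne_zero_of_hasDerivWithinAt hBc hKc hvar hX0 hnz)
  refine ⟨fun t ht => ?_, hint, hpos, hint ▸ hpos⟩
  rw [(hq t ht).derivWithin (uniqueDiffOn_Icc h t ht)]
  ring

/-- Sufficiency of a global symmetric Riccati solution for positivity of
the second variation (coordinate form of Theorem 3.3). With `G` continuous symmetric
positive definite, `N` continuous symmetric, `B` continuous, and `C` a `C¹` symmetric
solution of `C' − C·B·G⁻¹·Bᵀ·C + N = 0` on `[t₀,t₁]`, every admissible nonzero pair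
`(X,Y)` with `X' = B·Y` vanishing at the endpoints satisfies the pointwise completion
identity `XᵀNX + YᵀGY + (XᵀCX)' = ỸᵀGỸ` with `Ỹ = Y + G⁻¹BᵀC X`, and the second
variation `∫ (XᵀNX + YᵀGY) dt = ∫ ỸᵀGỸ dt > 0`. -/
theorem stmt_13 (n r : ℕ) (t₀ t₁ : ℝ) (h : t₀ < t₁)
    (G : ℝ → Matrix (Fin r) (Fin r) ℝ) (hGc : ContinuousOn G (Icc t₀ t₁))
    (hGs : ∀ t ∈ Icc t₀ t₁, (G t)ᵀ = G t)
    (hGpos : ∀ t ∈ Icc t₀ t₁, ∀ v : Fin r → ℝ, v ≠ 0 → 0 < v ⬝ᵥ (G t).mulVec v)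
    (B : ℝ → Matrix (Fin n) (Fin r) ℝ) (hBc : ContinuousOn B (Icc t₀ t₁))
    (N : ℝ → Matrix (Fin n) (Fin n) ℝ) (hNc : ContinuousOn N (Icc t₀ t₁))
    (hNs : ∀ t ∈ Icc t₀ t₁, (N t)ᵀ = N t)
    (C : ℝ → Matrix (Fin n) (Fin n) ℝ)
    (hCs : ∀ t ∈ Icc t₀ t₁, (C t)ᵀ = C t)
    (hCd : ∀ t ∈ Icc t₀ t₁, ∀ i j, HasDerivWithinAt (fun s => C s i j)
      ((C t * B t * (G t)⁻¹ * (B t)ᵀ * C t - N t) i j) (Icc t₀ t₁) t)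
    (X : ℝ → Fin n → ℝ) (Y : ℝ → Fin r → ℝ)
    (hXc : ContinuousOn X (Icc t₀ t₁)) (hYc : ContinuousOn Y (Icc t₀ t₁))
    (hvar : ∀ t ∈ Icc t₀ t₁, HasDerivWithinAt X ((B t).mulVec (Y t)) (Icc t₀ t₁) t)
    (hX0 : X t₀ = 0) (hX1 : X t₁ = 0)
    (hnz : ∃ t ∈ Icc t₀ t₁, X t ≠ 0 ∨ Y t ≠ 0)
    (Ytil : ℝ → Fin r → ℝ)
    (hYtil : ∀ t, Ytil t = Y t + ((G t)⁻¹ * (B t)ᵀ * C t).mulVec (X t)) :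
    (∀ t ∈ Icc t₀ t₁,
      X t ⬝ᵥ (N t).mulVec (X t) + Y t ⬝ᵥ (G t).mulVec (Y t) +
          derivWithin (fun s => X s ⬝ᵥ (C s).mulVec (X s)) (Icc t₀ t₁) t
        = Ytil t ⬝ᵥ (G t).mulVec (Ytil t)) ∧
    (∫ t in t₀..t₁, (X t ⬝ᵥ (N t).mulVec (X t) + Y t ⬝ᵥ (G t).mulVec (Y t)))
      = (∫ t in t₀..t₁, Ytil t ⬝ᵥ (G t).mulVec (Ytil t)) ∧
    0 < (∫ t in t₀..t₁, Ytil t ⬝ᵥ (G t).mulVec (Ytil t)) ∧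
    0 < ∫ t in t₀..t₁, (X t ⬝ᵥ (N t).mulVec (X t) + Y t ⬝ᵥ (G t).mulVec (Y t)) :=
  stmt_13_general n r t₀ t₁ h G hGc hGs hGpos B hBc N hNc C hCs hCd X Y hYc hvar hX0 hX1 hnz Ytil
    hYtil
end

section
/- (Jacobi fields pair with deformations via a boundary term) Let M, N : [t₀,t₁] → Matrix (Fin n) (Fin n) ℝ be continuous with N symmetric, B : [t₀,t₁] → Matrix (Fin n) (Fin r) ℝ continuous, G positive definite symmetric with M = B G⁻¹ Bᵀ. Suppose (X, π) solves the Jacobi (Hamiltonian) system X' = M π, π' = N X, and set Y := G⁻¹ Bᵀ π. Then for every C¹ pair (Z, W) with Z' = B W, one has d/dt ( πᵀ Z ) = Xᵀ N Z + Yᵀ G W, i.e. the second-variation bilinear integrand evaluated on the Jacobi deformation (X,Y) and an arbitrary admissible deformation (Z,W) is an exact time derivative. -/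
/-!
By the product rule and `π' = N X`, `Z' = B W`, one has `d/dt (πᵀ Z) = (N X)ᵀ Z + πᵀ B W`.
The first term is `Xᵀ N Z` because `N` is symmetric, and the
second is `Yᵀ G W` because `Bᵀ π = G Y` with `G` symmetric and (being positive definite)
invertible.
-/

open Matrix Set

theorem HasDerivAt.dotProduct {𝕜 ι : Type*} [NontriviallyNormedField 𝕜] [Fintype ι]
    {f g : 𝕜 → ι → 𝕜} {f' g' : ι → 𝕜} {t : 𝕜}
    (hf : HasDerivAt f f' t) (hg : HasDerivAt g g' t) :
    HasDerivAt (fun s => f s ⬝ᵥ g s) (f' ⬝ᵥ g t + f t ⬝ᵥ g') t := by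
  simp only [_root_.dotProduct, ← Finset.sum_add_distrib]
  exact HasDerivAt.fun_sum fun i _ => (hasDerivAt_pi.mp hf i).mul (hasDerivAt_pi.mp hg i)

namespace Matrix

variable {m n R : Type*} [Fintype m] [Fintype n] [CommRing R]

theorem mulVec_dotProduct_of_transpose_eq {A : Matrix m m R} (hA : Aᵀ = A) (v w : m → R) :
    A *ᵥ v ⬝ᵥ w = v ⬝ᵥ A *ᵥ w := by
  rw [dotProduct_comm, ← dotProduct_transpose_mulVec, hA]

theorem inv_mulVec_transpose_mulVec_dotProduct [DecidableEq n] {G : Matrix n n R} (hGs : Gᵀ = G)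
    (hG : IsUnit G) (B : Matrix m n R) (p : m → R) (w : n → R) :
    G⁻¹ *ᵥ (Bᵀ *ᵥ p) ⬝ᵥ G *ᵥ w = p ⬝ᵥ B *ᵥ w := by
  rw [← dotProduct_transpose_mulVec, mulVec_mulVec, hGs,
    mul_nonsing_inv _ ((isUnit_iff_isUnit_det G).mp hG), one_mulVec, dotProduct_transpose_mulVec]

theorem PosDef.of_transpose_eq_of_dotProduct_mulVec_pos {A : Matrix n n ℝ} (hAs : Aᵀ = A)
    (hA : ∀ v : n → ℝ, v ≠ 0 → 0 < v ⬝ᵥ A *ᵥ v) : A.PosDef :=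
  .of_dotProduct_mulVec_pos hAs fun v hv => by simpa using hA v hv

end Matrix

theorem stmt_14_general (n r : ℕ) (t₀ t₁ : ℝ)
    (G : ℝ → Matrix (Fin r) (Fin r) ℝ)
    (hGs : ∀ t ∈ Icc t₀ t₁, (G t)ᵀ = G t)
    (hGpos : ∀ t ∈ Icc t₀ t₁, ∀ v : Fin r → ℝ, v ≠ 0 → 0 < v ⬝ᵥ (G t).mulVec v)
    (B : ℝ → Matrix (Fin n) (Fin r) ℝ)
    (N : ℝ → Matrix (Fin n) (Fin n) ℝ)
    (hNs : ∀ t ∈ Icc t₀ t₁, (N t)ᵀ = N t)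
    (X pvec Z : ℝ → Fin n → ℝ) (W Y : ℝ → Fin r → ℝ)
    (hpvec : ∀ t ∈ Icc t₀ t₁, HasDerivAt pvec ((N t).mulVec (X t)) t)
    (hY : ∀ t, Y t = ((G t)⁻¹).mulVec (((B t)ᵀ).mulVec (pvec t)))
    (hZ : ∀ t ∈ Icc t₀ t₁, HasDerivAt Z ((B t).mulVec (W t)) t) :
    ∀ t ∈ Icc t₀ t₁, HasDerivAt (fun s => pvec s ⬝ᵥ Z s)
      (X t ⬝ᵥ (N t).mulVec (Z t) + Y t ⬝ᵥ (G t).mulVec (W t)) t := by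
  intro t ht
  have hGunit : IsUnit (G t) :=
    (PosDef.of_transpose_eq_of_dotProduct_mulVec_pos (hGs t ht) (hGpos t ht)).isUnit
  rw [← mulVec_dotProduct_of_transpose_eq (hNs t ht), hY t,
    inv_mulVec_transpose_mulVec_dotProduct (hGs t ht) hGunit]
  exact (hpvec t ht).dotProduct (hZ t ht)

/-- Proposition 4.1 in trivialized form. If `(X, π)` solves the Jacobi
system `X' = M·π`, `π' = N·X` with `M = B·G⁻¹·Bᵀ`, `N` symmetric, `G` symmetric positive
definite, and `Y := G⁻¹·Bᵀ·π`, then for every admissible pair `(Z, W)` with `Z' = B·W`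
one has `d/dt (πᵀ Z) = Xᵀ N Z + Yᵀ G W`. -/
theorem stmt_14 (n r : ℕ) (t₀ t₁ : ℝ) (h : t₀ < t₁)
    (G : ℝ → Matrix (Fin r) (Fin r) ℝ) (hGc : ContinuousOn G (Icc t₀ t₁))
    (hGs : ∀ t ∈ Icc t₀ t₁, (G t)ᵀ = G t)
    (hGpos : ∀ t ∈ Icc t₀ t₁, ∀ v : Fin r → ℝ, v ≠ 0 → 0 < v ⬝ᵥ (G t).mulVec v)
    (B : ℝ → Matrix (Fin n) (Fin r) ℝ) (hBc : ContinuousOn B (Icc t₀ t₁))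
    (N M : ℝ → Matrix (Fin n) (Fin n) ℝ)
    (hNc : ContinuousOn N (Icc t₀ t₁)) (hMc : ContinuousOn M (Icc t₀ t₁))
    (hNs : ∀ t ∈ Icc t₀ t₁, (N t)ᵀ = N t)
    (hM : ∀ t ∈ Icc t₀ t₁, M t = B t * (G t)⁻¹ * (B t)ᵀ)
    (X pvec Z : ℝ → Fin n → ℝ) (W Y : ℝ → Fin r → ℝ)
    (hX : ∀ t ∈ Icc t₀ t₁, HasDerivAt X ((M t).mulVec (pvec t)) t)
    (hpvec : ∀ t ∈ Icc t₀ t₁, HasDerivAt pvec ((N t).mulVec (X t)) t)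
    (hY : ∀ t, Y t = ((G t)⁻¹).mulVec (((B t)ᵀ).mulVec (pvec t)))
    (hZ : ∀ t ∈ Icc t₀ t₁, HasDerivAt Z ((B t).mulVec (W t)) t) :
    ∀ t ∈ Icc t₀ t₁, HasDerivAt (fun s => pvec s ⬝ᵥ Z s)
      (X t ⬝ᵥ (N t).mulVec (Z t) + Y t ⬝ᵥ (G t).mulVec (W t)) t :=
  stmt_14_general n r t₀ t₁ G hGs hGpos B N hNs X pvec Z W Y hpvec hY hZ
end

section
/- (No conjugate points implies global symmetric Riccati solution) Let M, N : (a,b) → Matrix (Fin n) (Fin n) ℝ be continuous and symmetric, [t₀,t₁] ⊂ (a,b). Let (K(t), E(t)) be the matrix solution of K' = M·E, E' = N·K with terminal data K(t*) = 0, E(t*) = I at some t* ∈ (t₁, b). If K(t) is invertible for all t ∈ [t₀, t*), then C(t) := −E(t)·K(t)⁻¹ is a symmetric solution of the Riccati equation C' − C·M·C + N = 0 on all of [t₀, t₁]; symmetry is established by showing R(t) := −K(t)·E(t)⁻¹ (defined near t*) solves the dual Riccati equation R' = M − R·N·R with symmetric value R(t*) = 0, hence is symmetric near t*, hence C = R⁻¹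 is symmetric near t*, and then everywhere by the linear ODE for the antisymmetric part. -/
/-! The matrix `Kᵀ E − Eᵀ K` is a conserved quantity of the system: its derivative is
`Eᵀ M E + Kᵀ N K − Kᵀ N K − Eᵀ M E = 0` because `M` and `N` are symmetric, and it vanishes at
`t*`. Wherever `K` is invertible, `Kᵀ E = Eᵀ K` says exactly that `E K⁻¹` is symmetric, and
differentiating `C = −E K⁻¹` with `(K⁻¹)' = −K⁻¹ K' K⁻¹` gives the Riccati equation. -/

open Matrix Set

section Entrywise

variable {𝕜 : Type*} [NontriviallyNormedField 𝕜] {l m n : Type*}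

-- Matrices carry no global norm instance, so derivatives are taken entry by entry.
def HasEntrywiseDerivAt (A : 𝕜 → Matrix m n 𝕜) (A' : Matrix m n 𝕜) (t : 𝕜) : Prop :=
  ∀ i j, HasDerivAt (fun s => A s i j) (A' i j) t

namespace HasEntrywiseDerivAt

variable {A B : 𝕜 → Matrix m n 𝕜} {A' B' : Matrix m n 𝕜} {t : 𝕜}

theorem neg (hA : HasEntrywiseDerivAt A A' t) : HasEntrywiseDerivAt (fun s => -A s) (-A') t :=
  fun i j => (hA i j).neg

theorem sub (hA : HasEntrywiseDerivAt A A' t) (hB : HasEntrywiseDerivAt B B' t) :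
    HasEntrywiseDerivAt (fun s => A s - B s) (A' - B') t :=
  fun i j => (hA i j).sub (hB i j)

theorem transpose (hA : HasEntrywiseDerivAt A A' t) :
    HasEntrywiseDerivAt (fun s => (A s)ᵀ) A'ᵀ t :=
  fun i j => hA j i

theorem mul [Fintype m] {A : 𝕜 → Matrix l m 𝕜} {A' : Matrix l m 𝕜}
    (hA : HasEntrywiseDerivAt A A' t) (hB : HasEntrywiseDerivAt B B' t) :
    HasEntrywiseDerivAt (fun s => A s * B s) (A' * B t + A t * B') t := by
  intro i j
  simp only [Matrix.mul_apply, Matrix.add_apply, ← Finset.sum_add_distrib]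
  exact HasDerivAt.fun_sum fun k _ => (hA i k).mul (hB k j)

theorem differentiableAt (hA : HasEntrywiseDerivAt A A' t) (i : m) (j : n) :
    DifferentiableAt 𝕜 (fun s => A s i j) t :=
  (hA i j).differentiableAt

end HasEntrywiseDerivAt

variable [Fintype n] [DecidableEq n] {A : 𝕜 → Matrix n n 𝕜} {t : 𝕜}

theorem differentiableAt_det_of_entries (h : ∀ i j, DifferentiableAt 𝕜 (fun s => A s i j) t) :
    DifferentiableAt 𝕜 (fun s => (A s).det) t := by
  simp only [Matrix.det_apply, Units.smul_def, zsmul_eq_mul]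
  exact DifferentiableAt.fun_sum fun σ _ =>
    (DifferentiableAt.fun_finsetProd fun i _ => h (σ i) i).const_mul _

theorem differentiableAt_adjugate_apply_of_entries
    (h : ∀ i j, DifferentiableAt 𝕜 (fun s => A s i j) t) (i j : n) :
    DifferentiableAt 𝕜 (fun s => (A s).adjugate i j) t := by
  simp only [Matrix.adjugate_apply]
  refine differentiableAt_det_of_entries fun k l => ?_
  by_cases hk : k = j
  · subst hk
    simpa only [Matrix.updateRow_self] using differentiableAt_const _
  · simpa only [Matrix.updateRow_ne hk] using h k l

theorem differentiableAt_inv_apply_of_entries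
    (h : ∀ i j, DifferentiableAt 𝕜 (fun s => A s i j) t) (hdet : IsUnit (A t).det) (i j : n) :
    DifferentiableAt 𝕜 (fun s => (A s)⁻¹ i j) t := by
  simp only [Matrix.inv_def, Matrix.smul_apply, Ring.inverse_eq_inv, smul_eq_mul]
  exact ((differentiableAt_det_of_entries h).inv hdet.ne_zero).mul
    (differentiableAt_adjugate_apply_of_entries h i j)

theorem HasEntrywiseDerivAt.inv {A' : Matrix n n 𝕜} (hA : HasEntrywiseDerivAt A A' t)
    (hdet : IsUnit (A t).det) :
    HasEntrywiseDerivAt (fun s => (A s)⁻¹) (-((A t)⁻¹ * A' * (A t)⁻¹)) t := by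
  set G : Matrix n n 𝕜 := of fun i j => deriv (fun s => (A s)⁻¹ i j) t
  have hG : HasEntrywiseDerivAt (fun s => (A s)⁻¹) G t := fun i j =>
    (differentiableAt_inv_apply_of_entries hA.differentiableAt hdet i j).hasDerivAt
  have hunit : ∀ᶠ s in nhds t, A s * (A s)⁻¹ = 1 :=
    ((differentiableAt_det_of_entries hA.differentiableAt).continuousAt.eventually_ne
      hdet.ne_zero).mono fun s hs => mul_nonsing_inv _ (isUnit_iff_ne_zero.2 hs)
  -- differentiating `A * A⁻¹ = 1` gives `A' A⁻¹ + A G = 0`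
  have hsum : A' * (A t)⁻¹ + A t * G = 0 := by
    ext i j
    refine ((hA.mul hG) i j).unique
      ((hasDerivAt_const t ((1 : Matrix n n 𝕜) i j)).congr_of_eventuallyEq ?_)
    filter_upwards [hunit] with s hs
    rw [hs]
  have : G = (A t)⁻¹ * (A t * G) := by
    rw [← Matrix.mul_assoc, nonsing_inv_mul _ hdet, Matrix.one_mul]
  rw [this, eq_neg_of_add_eq_zero_right hsum] at hG
  simpa only [Matrix.mul_neg, Matrix.mul_assoc] using hG

end Entrywise

theorem hasEntrywiseDerivAt_riccati {𝕜 n : Type*} [NontriviallyNormedField 𝕜] [Fintype n]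
    [DecidableEq n] {K E : 𝕜 → Matrix n n 𝕜} {M N : Matrix n n 𝕜} {t : 𝕜}
    (hK : HasEntrywiseDerivAt K (M * E t) t) (hE : HasEntrywiseDerivAt E (N * K t) t)
    (hdet : IsUnit (K t).det) :
    HasEntrywiseDerivAt (fun s => -(E s * (K s)⁻¹))
      (-(E t * (K t)⁻¹) * M * -(E t * (K t)⁻¹) - N) t := by
  convert (hE.mul (hK.inv hdet)).neg using 1
  rw [Matrix.mul_assoc N, mul_nonsing_inv _ hdet]
  noncomm_ring

theorem Matrix.isSymm_mul_inv_of_transpose_mul_eq_s18 {α n : Type*} [CommRing α] [Fintype n]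
    [DecidableEq n] {K E : Matrix n n α} (h : Kᵀ * E = Eᵀ * K) (hK : IsUnit K.det) :
    (E * K⁻¹).IsSymm := by
  have hKt : IsUnit Kᵀ.det := by rwa [det_transpose]
  calc (E * K⁻¹)ᵀ = Kᵀ⁻¹ * (Eᵀ * K) * K⁻¹ := by
        rw [transpose_mul, transpose_nonsing_inv, Matrix.mul_assoc, Matrix.mul_assoc,
          mul_nonsing_inv _ hK, Matrix.mul_one]
    _ = E * K⁻¹ := by
        rw [← h, ← Matrix.mul_assoc, nonsing_inv_mul _ hKt, Matrix.one_mul]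

theorem transpose_mul_sub_transpose_mul_eq_of_hasEntrywiseDerivAt {𝕜 n : Type*} [RCLike 𝕜]
    [Fintype n] {U : Set 𝕜} (hUo : IsOpen U) (hUc : IsPreconnected U)
    {K E M N : 𝕜 → Matrix n n 𝕜}
    (hMs : ∀ t ∈ U, (M t)ᵀ = M t) (hNs : ∀ t ∈ U, (N t)ᵀ = N t)
    (hK : ∀ t ∈ U, HasEntrywiseDerivAt K (M t * E t) t)
    (hE : ∀ t ∈ U, HasEntrywiseDerivAt E (N t * K t) t) {s t : 𝕜} (hs : s ∈ U) (ht : t ∈ U) :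
    (K s)ᵀ * E s - (E s)ᵀ * K s = (K t)ᵀ * E t - (E t)ᵀ * K t := by
  have hW : ∀ u ∈ U, HasEntrywiseDerivAt (fun s => (K s)ᵀ * E s - (E s)ᵀ * K s) 0 u := by
    intro u hu
    convert ((hK u hu).transpose.mul (hE u hu)).sub ((hE u hu).transpose.mul (hK u hu)) using 1
    simp only [transpose_mul, hMs u hu, hNs u hu, Matrix.mul_assoc]
    abel
  ext i j
  exact hUo.is_const_of_deriv_eq_zero hUc
    (fun u hu => ((hW u hu) i j).differentiableAt.differentiableWithinAt)
    (fun u hu => ((hW u hu) i j).deriv) hs ht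

theorem stmt_18_general (n : ℕ) (a b t₀ t₁ tstar : ℝ)
    (hab : a < t₀) (h1s : t₁ < tstar) (hsb : tstar < b)
    (M N : ℝ → Matrix (Fin n) (Fin n) ℝ)
    (hMs : ∀ t ∈ Ioo a b, (M t)ᵀ = M t) (hNs : ∀ t ∈ Ioo a b, (N t)ᵀ = N t)
    (K E : ℝ → Matrix (Fin n) (Fin n) ℝ)
    (hK : ∀ t ∈ Ioo a b, ∀ i j, HasDerivAt (fun s => K s i j) ((M t * E t) i j) t)
    (hE : ∀ t ∈ Ioo a b, ∀ i j, HasDerivAt (fun s => E s i j) ((N t * K t) i j) t)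
    (hKs : K tstar = 0) (hEs : E tstar = 1)
    (hinv : ∀ t ∈ Ico t₀ tstar, IsUnit (K t).det)
    (C : ℝ → Matrix (Fin n) (Fin n) ℝ) (hC : ∀ t, C t = -(E t * (K t)⁻¹)) :
    ∀ t ∈ Icc t₀ t₁, (C t)ᵀ = C t ∧
      ∀ i j, HasDerivWithinAt (fun s => C s i j)
        ((C t * M t * C t - N t) i j) (Icc t₀ t₁) t := by
  obtain rfl : C = fun s => -(E s * (K s)⁻¹) := funext hC
  intro t ht
  have htI : t ∈ Ioo a b := ⟨hab.trans_le ht.1, (ht.2.trans_lt h1s).trans hsb⟩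
  have hsI : tstar ∈ Ioo a b := ⟨htI.1.trans (ht.2.trans_lt h1s), hsb⟩
  have hdet : IsUnit (K t).det := hinv t ⟨ht.1, ht.2.trans_lt h1s⟩
  have hW : (K t)ᵀ * E t = (E t)ᵀ * K t := by
    rw [← sub_eq_zero, transpose_mul_sub_transpose_mul_eq_of_hasEntrywiseDerivAt isOpen_Ioo
      isPreconnected_Ioo hMs hNs hK hE htI hsI, hKs, hEs]
    simp
  exact ⟨(isSymm_mul_inv_of_transpose_mul_eq_s18 hW hdet).neg,
    fun i j => (hasEntrywiseDerivAt_riccati (hK t htI) (hE t htI) hdet i j).hasDerivWithinAt⟩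

/-- Proposition 5.1 in trivialized form. If `(K, E)` solves the linear
system `K' = M·E`, `E' = N·K` (with `M, N` continuous symmetric) with terminal data
`K t* = 0`, `E t* = 1`, and `K` is invertible on `[t₀, t*)` (absence of conjugate
points), then `C := −E·K⁻¹` is a symmetric solution of the Riccati equation
`C' − C·M·C + N = 0` on all of `[t₀, t₁]`. -/
theorem stmt_18 (n : ℕ) (a b t₀ t₁ tstar : ℝ)
    (hab : a < t₀) (h01 : t₀ < t₁) (h1s : t₁ < tstar) (hsb : tstar < b)
    (M N : ℝ → Matrix (Fin n) (Fin n) ℝ)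
    (hMc : ContinuousOn M (Ioo a b)) (hNc : ContinuousOn N (Ioo a b))
    (hMs : ∀ t ∈ Ioo a b, (M t)ᵀ = M t) (hNs : ∀ t ∈ Ioo a b, (N t)ᵀ = N t)
    (K E : ℝ → Matrix (Fin n) (Fin n) ℝ)
    (hK : ∀ t ∈ Ioo a b, ∀ i j, HasDerivAt (fun s => K s i j) ((M t * E t) i j) t)
    (hE : ∀ t ∈ Ioo a b, ∀ i j, HasDerivAt (fun s => E s i j) ((N t * K t) i j) t)
    (hKs : K tstar = 0) (hEs : E tstar = 1)
    (hinv : ∀ t ∈ Ico t₀ tstar, IsUnit (K t).det)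
    (C : ℝ → Matrix (Fin n) (Fin n) ℝ) (hC : ∀ t, C t = -(E t * (K t)⁻¹)) :
    ∀ t ∈ Icc t₀ t₁, (C t)ᵀ = C t ∧
      ∀ i j, HasDerivWithinAt (fun s => C s i j)
        ((C t * M t * C t - N t) i j) (Icc t₀ t₁) t :=
  stmt_18_general n a b t₀ t₁ tstar hab h1s hsb M N hMs hNs K E hK hE hKs hEs hinv C hC
end

section
/- (Adapted function makes the Lagrangian critical along the extremal) Let ψ : ℝ × ℝⁿ × ℝʳ → ℝⁿ and L : ℝ × ℝⁿ × ℝʳ → ℝ be C², and let (q(t), z(t), p(t)) on [t₀,t₁] solve the Pontryagin equations q' = ψ, p'ᵢ + Σₖ pₖ ∂ψᵏ/∂qⁱ = ∂L/∂qⁱ, Σᵢ pᵢ ∂ψⁱ/∂zᴬ = ∂L/∂zᴬ. Define S₀(t, q) := Σᵢ pᵢ(t)(qⁱ − qⁱ(t)) + ∫_{t₀}^{t} L(s, q(s), z(s)) ds and the symbolic derivative Ṡ₀(t,q,z) := ∂S₀/∂t + Σᵢ (∂S₀/∂qⁱ) ψⁱ(t,q,z). Then L' := L − Ṡ₀ satisfies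 L'(t, q(t), z(t)) = 0 and all first partial derivatives ∂L'/∂qⁱ and ∂L'/∂zᴬ vanish at (t, q(t), z(t)) for every t ∈ [t₀,t₁]. -/
open Set intervalIntegral

/-! By the product rule and the fundamental theorem of calculus,
`dS₀(t, y)(1, v) = Σ pᵢ(t) (vⁱ - q̇ⁱ(t)) + Σ ṗᵢ(t) (yⁱ - qⁱ(t)) + L(γ t)` with `γ t = (t, q t, z t)`,
and `q̇ = ψ ∘ γ`; hence `L'(γ t) = 0`. At a fixed time `t`, `L'` equals
`L - Σ pᵢ(t) ψⁱ - Σ ṗᵢ(t) qⁱ` up to a constant, so its partial derivatives in `qⁱ` and `zᴬ` at `γ t`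
are the defects of the costate equation and of the algebraic equation, which vanish. -/

section LineDeriv

variable {E F : Type*} [NormedAddCommGroup E] [NormedSpace ℝ E]
  [NormedAddCommGroup F] [NormedSpace ℝ F]

theorem fderiv_apply_eq_zero_of_hasLineDerivAt_zero {f : E → F} {x v : E}
    (h : HasLineDerivAt ℝ f 0 x v) : fderiv ℝ f x v = 0 := by
  by_cases hf : DifferentiableAt ℝ f x
  · exact (hf.hasFDerivAt.hasLineDerivAt v).unique h
  · simp [fderiv_zero_of_not_differentiableAt hf]

theorem HasLineDerivAt.congr_of_forall_line {f g : E → F} {f' : F} {x v : E}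
    (h : HasLineDerivAt ℝ g f' x v) (hfg : ∀ s : ℝ, f (x + s • v) = g (x + s • v)) :
    HasLineDerivAt ℝ f f' x v :=
  HasDerivAt.congr_of_eventuallyEq h (.of_forall hfg)

end LineDeriv

section Adapted

variable {ι : Type*} [Fintype ι]

noncomputable def adaptedFunction (t₀ : ℝ) (p q : ℝ → ι → ℝ) (f : ℝ → ℝ) (x : ℝ × (ι → ℝ)) : ℝ :=
  (∑ i, p x.1 i * (x.2 i - q x.1 i)) + ∫ s in t₀..x.1, f s

theorem fderiv_adaptedFunction_apply_one (t₀ : ℝ) {p q : ℝ → ι → ℝ} {f : ℝ → ℝ}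
    {a : ℝ} {p' q' : ι → ℝ} (hp : ∀ i, HasDerivAt (fun s => p s i) (p' i) a)
    (hq : HasDerivAt q q' a) (hf : Continuous f) (y w : ι → ℝ) :
    fderiv ℝ (adaptedFunction t₀ p q f) (a, y) (1, w) =
      (∑ i, (p a i * (w i - q' i) + p' i * (y i - q a i))) + f a := by
  have hfst : HasFDerivAt (Prod.fst : ℝ × (ι → ℝ) → ℝ) (ContinuousLinearMap.fst ℝ ℝ (ι → ℝ)) (a, y) :=
    hasFDerivAt_fst
  have hsum := HasFDerivAt.fun_sum (u := Finset.univ) fun i _ =>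
    ((hp i).hasFDerivAt.comp (a, y) hfst).mul
      ((ContinuousLinearMap.proj i ∘L ContinuousLinearMap.snd ℝ ℝ (ι → ℝ)).hasFDerivAt.sub
        (((hasDerivAt_pi.1 hq i).hasFDerivAt).comp (a, y) hfst))
  have hint := (hf.integral_hasStrictDerivAt t₀ a).hasDerivAt.hasFDerivAt.comp (a, y) hfst
  have hS : HasFDerivAt (adaptedFunction t₀ p q f) _ (a, y) := hsum.add hint
  rw [hS.fderiv]
  simp [mul_comm]

end Adapted

section Fibre

variable {ι Z : Type*} [Fintype ι] [NormedAddCommGroup Z] [NormedSpace ℝ Z]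

theorem hasLineDerivAt_sub_sum_mul {L : ℝ × (ι → ℝ) × Z → ℝ} {ψ : ℝ × (ι → ℝ) × Z → ι → ℝ}
    {x : ℝ × (ι → ℝ) × Z} (hL : DifferentiableAt ℝ L x)
    (hψ : ∀ k, DifferentiableAt ℝ (fun x => ψ x k) x) (c a b y₀ : ι → ℝ) (e : ℝ)
    (d : ℝ × (ι → ℝ) × Z) :
    HasLineDerivAt ℝ
      (fun x => L x - ((∑ k, (c k * (ψ x k - a k) + b k * (x.2.1 k - y₀ k))) + e))
      (fderiv ℝ L x d - ∑ k, (c k * fderiv ℝ (fun x => ψ x k) x d + b k * d.2.1 k)) x d := by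
  have hπ : ∀ k, HasLineDerivAt ℝ (fun x : ℝ × (ι → ℝ) × Z => x.2.1 k) (d.2.1 k) x d := fun k =>
    (ContinuousLinearMap.proj k ∘L ContinuousLinearMap.fst ℝ (ι → ℝ) Z ∘L
      ContinuousLinearMap.snd ℝ ℝ ((ι → ℝ) × Z)).hasFDerivAt.hasLineDerivAt d
  exact (hL.hasFDerivAt.hasLineDerivAt d).sub <| (HasDerivAt.fun_sum fun k _ =>
    ((((hψ k).hasFDerivAt.hasLineDerivAt d).sub_const (a k)).const_mul (c k)).add
      (((hπ k).sub_const (y₀ k)).const_mul (b k))).add_const e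

end Fibre

theorem stmt_19_general (n r : ℕ) (t₀ t₁ : ℝ)
    (ψ : ℝ × (Fin n → ℝ) × (Fin r → ℝ) → Fin n → ℝ) (hψ : ContDiff ℝ 2 ψ)
    (L : ℝ × (Fin n → ℝ) × (Fin r → ℝ) → ℝ) (hL : ContDiff ℝ 2 L)
    (q : ℝ → Fin n → ℝ) (z : ℝ → Fin r → ℝ) (p : ℝ → Fin n → ℝ)
    (hz : Continuous z)
    (hq : ∀ t, HasDerivAt q (ψ (t, q t, z t)) t)
    (hp : ∀ t, ∀ i : Fin n, HasDerivAt (fun s => p s i)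
      (fderiv ℝ L (t, q t, z t) ((0 : ℝ), Pi.single i 1, (0 : Fin r → ℝ)) -
        ∑ k, p t k * fderiv ℝ (fun x => ψ x k) (t, q t, z t)
          ((0 : ℝ), Pi.single i 1, (0 : Fin r → ℝ))) t)
    (halg : ∀ t, ∀ A : Fin r,
      (∑ k, p t k * fderiv ℝ (fun x => ψ x k) (t, q t, z t)
          ((0 : ℝ), (0 : Fin n → ℝ), Pi.single A 1))
        = fderiv ℝ L (t, q t, z t) ((0 : ℝ), (0 : Fin n → ℝ), Pi.single A 1))
    (S₀ : ℝ × (Fin n → ℝ) → ℝ)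
    (hS₀ : S₀ = fun x => (∑ i, p x.1 i * (x.2 i - q x.1 i)) +
      ∫ s in t₀..x.1, L (s, q s, z s))
    (L' : ℝ × (Fin n → ℝ) × (Fin r → ℝ) → ℝ)
    (hL' : L' = fun x => L x - fderiv ℝ S₀ (x.1, x.2.1) (1, ψ x)) :
    ∀ t ∈ Icc t₀ t₁,
      L' (t, q t, z t) = 0 ∧
      (∀ i : Fin n,
        fderiv ℝ L' (t, q t, z t) ((0 : ℝ), Pi.single i 1, (0 : Fin r → ℝ)) = 0) ∧
      (∀ A : Fin r,
        fderiv ℝ L' (t, q t, z t) ((0 : ℝ), (0 : Fin n → ℝ), Pi.single A 1) = 0) := by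
  set p' : ℝ → Fin n → ℝ := fun t i =>
    fderiv ℝ L (t, q t, z t) ((0 : ℝ), Pi.single i 1, (0 : Fin r → ℝ)) -
      ∑ k, p t k * fderiv ℝ (fun x => ψ x k) (t, q t, z t) ((0 : ℝ), Pi.single i 1, 0)
  have hLγ : Continuous fun s => L (s, q s, z s) := hL.continuous.comp <|
    continuous_id.prodMk ((continuous_iff_continuousAt.2 fun s => (hq s).continuousAt).prodMk hz)
  have hL'_eq : ∀ x, L' x = L x - ((∑ i, (p x.1 i * (ψ x i - ψ (x.1, q x.1, z x.1) i) +
      p' x.1 i * (x.2.1 i - q x.1 i))) + L (x.1, q x.1, z x.1)) := fun x => by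
    subst hL' hS₀
    exact congrArg (L x - ·) (fderiv_adaptedFunction_apply_one t₀ (hp x.1) (hq x.1) hLγ _ _)
  intro t _
  -- `L'` need not be differentiable in `t` (`ṗ` is merely continuous), and then `fderiv ℝ L'` is
  -- the junk value `0`; so the partial derivatives are computed as line derivatives.
  have hfibre : ∀ u w, HasLineDerivAt ℝ L'
      (fderiv ℝ L (t, q t, z t) (0, u, w) - ∑ k, (p t k * fderiv ℝ (fun x => ψ x k)
        (t, q t, z t) (0, u, w) + p' t k * u k)) (t, q t, z t) (0, u, w) :=
    fun u w => (hasLineDerivAt_sub_sum_mul ((hL.differentiable two_ne_zero) _)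
      (fun k => (differentiable_pi.1 (hψ.differentiable two_ne_zero) k) _)
      (p t) (ψ (t, q t, z t)) (p' t) (q t) (L (t, q t, z t)) _).congr_of_forall_line
      fun s => by simp [hL'_eq]
  refine ⟨by simp [hL'_eq], fun i => ?_, fun A => ?_⟩
  · refine fderiv_apply_eq_zero_of_hasLineDerivAt_zero
      (HasDerivAt.congr_deriv (hfibre (Pi.single i 1) 0) ?_)
    simp [p', Pi.single_apply, Finset.sum_add_distrib]
  · refine fderiv_apply_eq_zero_of_hasLineDerivAt_zero
      (HasDerivAt.congr_deriv (hfibre 0 (Pi.single A 1)) ?_)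
    simp [halg]

/-- The adapted function `S₀` makes the Lagrangian critical along the
extremal. If `(q, z, p)` solves the Pontryagin equations for `(ψ, L)`, and
`S₀(t, q) = Σᵢ pᵢ(t)(qⁱ − qⁱ(t)) + ∫_{t₀}^{t} L(s, q(s), z(s)) ds`, then
`L' := L − Ṡ₀` (with `Ṡ₀(t,q,z) = (dS₀)(1, ψ)` the symbolic time derivative) vanishes
along the lifted extremal together with all its first partial derivatives in the `q`
and `z` directions. -/
theorem stmt_19 (n r : ℕ) (t₀ t₁ : ℝ) (h : t₀ < t₁)
    (ψ : ℝ × (Fin n → ℝ) × (Fin r → ℝ) → Fin n → ℝ) (hψ : ContDiff ℝ 2 ψ)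
    (L : ℝ × (Fin n → ℝ) × (Fin r → ℝ) → ℝ) (hL : ContDiff ℝ 2 L)
    (q : ℝ → Fin n → ℝ) (z : ℝ → Fin r → ℝ) (p : ℝ → Fin n → ℝ)
    (hz : Continuous z) (hpc : Continuous p)
    (hq : ∀ t, HasDerivAt q (ψ (t, q t, z t)) t)
    (hp : ∀ t, ∀ i : Fin n, HasDerivAt (fun s => p s i)
      (fderiv ℝ L (t, q t, z t) ((0 : ℝ), Pi.single i 1, (0 : Fin r → ℝ)) -
        ∑ k, p t k * fderiv ℝ (fun x => ψ x k) (t, q t, z t)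
          ((0 : ℝ), Pi.single i 1, (0 : Fin r → ℝ))) t)
    (halg : ∀ t, ∀ A : Fin r,
      (∑ k, p t k * fderiv ℝ (fun x => ψ x k) (t, q t, z t)
          ((0 : ℝ), (0 : Fin n → ℝ), Pi.single A 1))
        = fderiv ℝ L (t, q t, z t) ((0 : ℝ), (0 : Fin n → ℝ), Pi.single A 1))
    (S₀ : ℝ × (Fin n → ℝ) → ℝ)
    (hS₀ : S₀ = fun x => (∑ i, p x.1 i * (x.2 i - q x.1 i)) +
      ∫ s in t₀..x.1, L (s, q s, z s))
    (L' : ℝ × (Fin n → ℝ) × (Fin r → ℝ) → ℝ)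
    (hL' : L' = fun x => L x - fderiv ℝ S₀ (x.1, x.2.1) (1, ψ x)) :
    ∀ t ∈ Icc t₀ t₁,
      L' (t, q t, z t) = 0 ∧
      (∀ i : Fin n,
        fderiv ℝ L' (t, q t, z t) ((0 : ℝ), Pi.single i 1, (0 : Fin r → ℝ)) = 0) ∧
      (∀ A : Fin r,
        fderiv ℝ L' (t, q t, z t) ((0 : ℝ), (0 : Fin n → ℝ), Pi.single A 1) = 0) :=
  stmt_19_general n r t₀ t₁ ψ hψ L hL q z p hz hq hp halg S₀ hS₀ L' hL'
end
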